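/- Let H be a separable real Hilbert space and N, β > 0. Then there exists a constant C > 0, depending only on N and β, such that for all Borel probability measures ν₁, ν₂, ν₃ on H, W_{d_{N,β/2}}(ν₁, ν₃) ≤ C ( W_{d_{N,β}}(ν₁, ν₂) + W_{d_{N,β}}(ν₂, ν₃) ), where W_d denotes the coupling distance associated with the cost d. -/

import Mathlib

/-!
Pointwise, `d_{N,β/2}(u,w)² ≤ (1 + 2 e^{β/(2N²)}) (d_{N,β}(u,v)² + d_{N,β}(v,w)²)`. Indeed the
truncated distances `min(N‖·‖, 1)` are subadditive, and the cross term
`min(N‖v-w‖,1) e^{β‖u‖²/4}` is bounded by `d_{N,β}(u,v)²` when `‖u-v‖ ≥ 1/N`, and by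
`e^{β/(2N²)} d_{N,β}(v,w)²` otherwise, because then `‖u‖² ≤ 2‖v‖² + 2/N²`.
The pointwise inequality passes to the coupling distances by gluing a coupling of `(ν₁, ν₂)` and
one of `(ν₂, ν₃)` along `ν₂`, which needs a disintegration and hence a standard Borel space.
-/

open MeasureTheory ProbabilityTheory
open scoped ENNReal

noncomputable section

variable {H : Type*} [NormedAddCommGroup H] [InnerProductSpace ℝ H]

/-- The distance-like function `d_{N,β}` on `H`. -/
def dH (N β : ℝ) (u v : H) : ℝ :=
  Real.sqrt (min (N * ‖u - v‖) 1 *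
    (1 + Real.exp (β / 2 * ‖u‖ ^ 2) + Real.exp (β / 2 * ‖v‖ ^ 2)))

/-- The coupling (Wasserstein-type) distance associated with a cost `d`. -/
def Wd {E : Type*} [MeasurableSpace E] (μ ν : Measure E) (d : E → E → ℝ) : ℝ≥0∞ :=
  sInf { r : ℝ≥0∞ | ∃ π : Measure (E × E), IsProbabilityMeasure π ∧
    π.map Prod.fst = μ ∧ π.map Prod.snd = ν ∧
    r = ∫⁻ p, ENNReal.ofReal (d p.1 p.2) ∂π }

section Gluing

variable {α β γ : Type*} [MeasurableSpace α] [MeasurableSpace β] [MeasurableSpace γ]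

lemma map_compProd_comap_snd (π : Measure (α × β)) [SFinite π] (κ : Kernel β γ)
    [IsSFiniteKernel κ] :
    (π ⊗ₘ κ.comap Prod.snd measurable_snd).map (fun p => (p.1.2, p.2)) = π.snd ⊗ₘ κ := by
  have hg : Measurable fun p : (α × β) × γ => (p.1.2, p.2) := by fun_prop
  ext s hs
  rw [Measure.map_apply hg hs, Measure.compProd_apply (hg hs), Measure.compProd_apply hs,
    Measure.snd, lintegral_map (Kernel.measurable_kernel_prodMk_left hs) measurable_snd]
  rfl

lemma exists_glue [StandardBorelSpace γ] [Nonempty γ]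
    (π₁₂ : Measure (α × β)) (π₂₃ : Measure (β × γ)) [IsProbabilityMeasure π₁₂]
    [IsFiniteMeasure π₂₃] (h : π₁₂.snd = π₂₃.fst) :
    ∃ μ : Measure ((α × β) × γ), IsProbabilityMeasure μ ∧
      μ.map Prod.fst = π₁₂ ∧ μ.map (fun p => (p.1.2, p.2)) = π₂₃ :=
  ⟨π₁₂ ⊗ₘ π₂₃.condKernel.comap Prod.snd measurable_snd, inferInstance,
    Measure.fst_compProd _ _, by rw [map_compProd_comap_snd, h, Measure.disintegrate]⟩

end Gluing

lemma le_mul_sInf_add_sInf {a c : ℝ≥0∞} {S T : Set ℝ≥0∞} (hc₀ : c ≠ 0) (hc : c ≠ ⊤)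
    (h : ∀ r ∈ S, ∀ s ∈ T, a ≤ c * (r + s)) : a ≤ c * (sInf S + sInf T) := by
  rw [mul_comm, ← ENNReal.div_le_iff hc₀ hc, ENNReal.sInf_add]
  refine le_iInf₂ fun r hr => ?_
  rw [ENNReal.add_sInf]
  refine le_iInf₂ fun s hs => ?_
  rw [ENNReal.div_le_iff hc₀ hc, mul_comm]
  exact h r hr s hs

section Coupling

variable {E : Type*} [MeasurableSpace E]

lemma Wd_le_lintegral {μ ν : Measure E} {d : E → E → ℝ} (π : Measure (E × E))
    [IsProbabilityMeasure π] (h₁ : π.map Prod.fst = μ) (h₂ : π.map Prod.snd = ν) :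
    Wd μ ν d ≤ ∫⁻ p, ENNReal.ofReal (d p.1 p.2) ∂π :=
  sInf_le ⟨π, inferInstance, h₁, h₂, rfl⟩

theorem Wd_le_mul_add [StandardBorelSpace E] [Nonempty E] {ν₁ ν₂ ν₃ : Measure E}
    {d d' : E → E → ℝ} {C : ℝ} (hC : 0 < C) (hd : Measurable (Function.uncurry d))
    (htri : ∀ u v w, d' u w ≤ C * (d u v + d v w)) :
    Wd ν₁ ν₃ d' ≤ ENNReal.ofReal C * (Wd ν₁ ν₂ d + Wd ν₂ ν₃ d) := by
  refine le_mul_sInf_add_sInf (by simpa using hC) ENNReal.ofReal_ne_top ?_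
  rintro _ ⟨π₁₂, _, h₁, h₂, rfl⟩ _ ⟨π₂₃, _, h₂', h₃, rfl⟩
  obtain ⟨μ, _, hμ₁₂, hμ₂₃⟩ := exists_glue π₁₂ π₂₃ (h₂.trans h₂'.symm)
  have hf : Measurable fun p : (E × E) × E => (p.1.1, p.2) := by fun_prop
  have hg : Measurable fun p : (E × E) × E => (p.1.2, p.2) := by fun_prop
  have hcost : Measurable fun p : E × E => ENNReal.ofReal (d p.1 p.2) :=
    ENNReal.measurable_ofReal.comp hd
  have hπ₁ : (μ.map fun p => (p.1.1, p.2)).map Prod.fst = ν₁ := by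
    rw [Measure.map_map measurable_fst hf, ← h₁, ← hμ₁₂, Measure.map_map measurable_fst
      measurable_fst]
    rfl
  have hπ₃ : (μ.map fun p => (p.1.1, p.2)).map Prod.snd = ν₃ := by
    rw [Measure.map_map measurable_snd hf, ← h₃, ← hμ₂₃, Measure.map_map measurable_snd hg]
    rfl
  have : IsProbabilityMeasure (μ.map fun p => (p.1.1, p.2)) :=
    Measure.isProbabilityMeasure_map hf.aemeasurable
  calc Wd ν₁ ν₃ d' ≤ ∫⁻ p, ENNReal.ofReal (d' p.1 p.2) ∂(μ.map fun p => (p.1.1, p.2)) :=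
        Wd_le_lintegral _ hπ₁ hπ₃
    _ ≤ ∫⁻ p, ENNReal.ofReal (d' p.1.1 p.2) ∂μ := lintegral_map_le _ _
    _ ≤ ∫⁻ p, ENNReal.ofReal C *
          (ENNReal.ofReal (d p.1.1 p.1.2) + ENNReal.ofReal (d p.1.2 p.2)) ∂μ := by
        refine lintegral_mono fun p => (ENNReal.ofReal_le_ofReal (htri _ p.1.2 _)).trans ?_
        rw [ENNReal.ofReal_mul hC.le]
        gcongr
        exact ENNReal.ofReal_add_le
    _ = ENNReal.ofReal C * (∫⁻ p, ENNReal.ofReal (d p.1 p.2) ∂π₁₂ +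
          ∫⁻ p, ENNReal.ofReal (d p.1 p.2) ∂π₂₃) := by
        rw [lintegral_const_mul' _ _ ENNReal.ofReal_ne_top,
          lintegral_add_left
            (f := fun p : (E × E) × E => ENNReal.ofReal (d p.1.1 p.1.2)) (hcost.comp measurable_fst), ← hμ₁₂, ← hμ₂₃,
          lintegral_map hcost measurable_fst, lintegral_map hcost hg]

end Coupling

lemma min_one_le_min_one_add_min_one {x y z : ℝ} (hy : 0 ≤ y) (hz : 0 ≤ z) (h : x ≤ y + z) :
    min x 1 ≤ min y 1 + min z 1 := by
  simp only [min_def]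
  split_ifs <;> linarith

lemma exp_half_mul_norm_sq_le {E : Type*} [SeminormedAddCommGroup E] {x y : E} {β r : ℝ}
    (hβ : 0 ≤ β) (h : ‖x - y‖ ≤ r) :
    Real.exp (β / 2 * ‖x‖ ^ 2) ≤ Real.exp (β * r ^ 2) * Real.exp (β * ‖y‖ ^ 2) := by
  rw [← Real.exp_add, Real.exp_le_exp]
  have hx : ‖x‖ ≤ ‖y‖ + r := (norm_le_norm_add_norm_sub' x y).trans (by linarith)
  have hsq : ‖x‖ ^ 2 ≤ 2 * r ^ 2 + 2 * ‖y‖ ^ 2 := by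
    nlinarith [norm_nonneg x, sq_nonneg (‖y‖ - r)]
  nlinarith

section dH

variable {E : Type*} [NormedAddCommGroup E] {N β : ℝ}

lemma dH_nonneg (N β : ℝ) (u v : E) : 0 ≤ dH N β u v := Real.sqrt_nonneg _

lemma dH_comm (N β : ℝ) (u v : E) : dH N β u v = dH N β v u := by
  rw [dH, dH, norm_sub_rev, add_right_comm]

lemma dH_sq (hN : 0 ≤ N) (u v : E) :
    dH N β u v ^ 2 =
      min (N * ‖u - v‖) 1 * (1 + Real.exp (β / 2 * ‖u‖ ^ 2) + Real.exp (β / 2 * ‖v‖ ^ 2)) :=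
  Real.sq_sqrt (mul_nonneg (le_min (by positivity) zero_le_one) (by positivity))

lemma continuous_uncurry_dH (N β : ℝ) : Continuous (Function.uncurry (dH (H := E) N β)) := by
  unfold dH Function.uncurry
  fun_prop


lemma min_mul_exp_le_dH_sq (hN : 0 < N) (hβ : 0 ≤ β) (u v w : E) :
    min (N * ‖v - w‖) 1 * Real.exp (β / 2 / 2 * ‖u‖ ^ 2) ≤
      Real.exp (β / 2 * N⁻¹ ^ 2) * (dH N β u v ^ 2 + dH N β v w ^ 2) := by
  have hC₀ : 1 ≤ Real.exp (β / 2 * N⁻¹ ^ 2) := Real.one_le_exp (by positivity)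
  have hb₀ : 0 ≤ min (N * ‖v - w‖) 1 := le_min (by positivity) zero_le_one
  have hb₁ : min (N * ‖v - w‖) 1 ≤ 1 := min_le_right _ _
  have hu : Real.exp (β / 2 / 2 * ‖u‖ ^ 2) ≤ Real.exp (β / 2 * ‖u‖ ^ 2) := by
    gcongr
    linarith
  have := Real.exp_nonneg (β / 2 * ‖v‖ ^ 2)
  have := Real.exp_nonneg (β / 2 * ‖w‖ ^ 2)
  rw [dH_sq hN.le, dH_sq hN.le]
  rcases le_or_gt 1 (N * ‖u - v‖) with hfar | hnear
  · rw [min_eq_right hfar]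
    calc min (N * ‖v - w‖) 1 * Real.exp (β / 2 / 2 * ‖u‖ ^ 2)
        ≤ Real.exp (β / 2 / 2 * ‖u‖ ^ 2) := mul_le_of_le_one_left (Real.exp_nonneg _) hb₁
      _ ≤ 1 * (1 + Real.exp (β / 2 * ‖u‖ ^ 2) + Real.exp (β / 2 * ‖v‖ ^ 2)) := by linarith
      _ ≤ _ := le_add_of_nonneg_right (by positivity)
      _ ≤ _ := le_mul_of_one_le_left (by positivity) hC₀
  · have huv : ‖u - v‖ ≤ N⁻¹ := by
      rw [← one_div, le_div_iff₀ hN]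
      linarith
    have hu' := exp_half_mul_norm_sq_le (β := β / 2) (by positivity) huv
    calc min (N * ‖v - w‖) 1 * Real.exp (β / 2 / 2 * ‖u‖ ^ 2)
        ≤ min (N * ‖v - w‖) 1 * (Real.exp (β / 2 * N⁻¹ ^ 2) *
            (1 + Real.exp (β / 2 * ‖v‖ ^ 2) + Real.exp (β / 2 * ‖w‖ ^ 2))) := by
          gcongr
          nlinarith
      _ ≤ _ := by
          rw [mul_left_comm]
          gcongr
          exact le_add_of_nonneg_left (mul_nonneg (le_min (by positivity) zero_le_one)
            (by positivity))

lemma dH_half_sq_le (hN : 0 < N) (hβ : 0 ≤ β) (u v w : E) :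
    dH N (β / 2) u w ^ 2 ≤
      (1 + 2 * Real.exp (β / 2 * N⁻¹ ^ 2)) * (dH N β u v ^ 2 + dH N β v w ^ 2) := by
  have hvw := min_mul_exp_le_dH_sq hN hβ u v w
  have huv := min_mul_exp_le_dH_sq hN hβ w v u
  rw [dH_comm N β w v, dH_comm N β v u, norm_sub_rev v u, add_comm (dH N β v w ^ 2)] at huv
  have ha₀ : 0 ≤ min (N * ‖u - v‖) 1 := le_min (by positivity) zero_le_one
  have hb₀ : 0 ≤ min (N * ‖v - w‖) 1 := le_min (by positivity) zero_le_one
  have hm : min (N * ‖u - w‖) 1 ≤ min (N * ‖u - v‖) 1 + min (N * ‖v - w‖) 1 :=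
    min_one_le_min_one_add_min_one (by positivity) (by positivity)
      (by nlinarith [norm_sub_le_norm_sub_add_norm_sub u v w])
  have hu : Real.exp (β / 2 / 2 * ‖u‖ ^ 2) ≤ Real.exp (β / 2 * ‖u‖ ^ 2) := by
    gcongr
    linarith
  have hw : Real.exp (β / 2 / 2 * ‖w‖ ^ 2) ≤ Real.exp (β / 2 * ‖w‖ ^ 2) := by
    gcongr
    linarith
  have hX : min (N * ‖u - v‖) 1 * (1 + Real.exp (β / 2 / 2 * ‖u‖ ^ 2)) ≤ dH N β u v ^ 2 := by
    rw [dH_sq hN.le]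
    exact mul_le_mul_of_nonneg_left (by linarith [Real.exp_nonneg (β / 2 * ‖v‖ ^ 2)]) ha₀
  have hY : min (N * ‖v - w‖) 1 * (1 + Real.exp (β / 2 / 2 * ‖w‖ ^ 2)) ≤ dH N β v w ^ 2 := by
    rw [dH_sq hN.le]
    exact mul_le_mul_of_nonneg_left (by linarith [Real.exp_nonneg (β / 2 * ‖v‖ ^ 2)]) hb₀
  calc dH N (β / 2) u w ^ 2
      = min (N * ‖u - w‖) 1 *
          (1 + Real.exp (β / 2 / 2 * ‖u‖ ^ 2) + Real.exp (β / 2 / 2 * ‖w‖ ^ 2)) := dH_sq hN.le u w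
    _ ≤ (min (N * ‖u - v‖) 1 + min (N * ‖v - w‖) 1) *
          (1 + Real.exp (β / 2 / 2 * ‖u‖ ^ 2) + Real.exp (β / 2 / 2 * ‖w‖ ^ 2)) := by
        gcongr
    _ = min (N * ‖u - v‖) 1 * (1 + Real.exp (β / 2 / 2 * ‖u‖ ^ 2)) +
          min (N * ‖v - w‖) 1 * (1 + Real.exp (β / 2 / 2 * ‖w‖ ^ 2)) +
          (min (N * ‖v - w‖) 1 * Real.exp (β / 2 / 2 * ‖u‖ ^ 2) +
            min (N * ‖u - v‖) 1 * Real.exp (β / 2 / 2 * ‖w‖ ^ 2)) := by ring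
    _ ≤ _ := by linarith

lemma dH_half_le (hN : 0 < N) (hβ : 0 ≤ β) (u v w : E) :
    dH N (β / 2) u w ≤
      √(1 + 2 * Real.exp (β / 2 * N⁻¹ ^ 2)) * (dH N β u v + dH N β v w) := by
  have hX := dH_nonneg N β u v
  have hY := dH_nonneg N β v w
  rw [← pow_le_pow_iff_left₀ (dH_nonneg _ _ _ _) (by positivity) two_ne_zero, mul_pow,
    Real.sq_sqrt (by positivity)]
  calc dH N (β / 2) u w ^ 2
      ≤ (1 + 2 * Real.exp (β / 2 * N⁻¹ ^ 2)) * (dH N β u v ^ 2 + dH N β v w ^ 2) :=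
        dH_half_sq_le hN hβ u v w
    _ ≤ _ := by
        gcongr
        nlinarith

end dH

/-- Generalized triangle inequality for the coupling distances
associated with `d_{N,β}` on a separable Hilbert space `H`. -/
theorem Wd_dH_triangle
    [CompleteSpace H] [TopologicalSpace.SeparableSpace H]
    [MeasurableSpace H] [BorelSpace H]
    (N β : ℝ) (hN : 0 < N) (hβ : 0 < β) :
    ∃ C > (0 : ℝ), ∀ ν₁ ν₂ ν₃ : Measure H,
      IsProbabilityMeasure ν₁ → IsProbabilityMeasure ν₂ → IsProbabilityMeasure ν₃ →
      Wd ν₁ ν₃ (dH N (β / 2)) ≤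
        ENNReal.ofReal C * (Wd ν₁ ν₂ (dH N β) + Wd ν₂ ν₃ (dH N β)) :=
  ⟨√(1 + 2 * Real.exp (β / 2 * N⁻¹ ^ 2)), by positivity, fun _ _ _ _ _ _ =>
    Wd_le_mul_add (by positivity) (continuous_uncurry_dH N β).measurable (dH_half_le hN hβ.le)⟩

end
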